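/- Consider the MSB auction with ρ ≥ 1 among N ≥ 2 bidders where winner n pays p_n(x) = ρ·max_{j≠n} x_j and losers pay 0. For every bidder n with valuation v_n > 0, truthful bidding x_n = v_n is a weakly dominant strategy: for any competing bids x_{-n} and any alternative bid x_n', the utility v_n·z_n(x_n, x_{-n}) − p_n(x_n, x_{-n}) is at least v_n·z_n(x_n', x_{-n}) − p_n(x_n', x_{-n}). -/
import Mathlib


noncomputable def maxOther {N : ℕ} (hN : 2 ≤ N) (x : Fin N → ℝ) (n : Fin N) : ℝ :=
  (Finset.univ.erase n).sup' (Finset.card_pos.mp (by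
    rw [Finset.card_erase_of_mem (Finset.mem_univ n), Finset.card_univ, Fintype.card_fin]
    omega)) x

noncomputable def zAlloc {N : ℕ} (hN : 2 ≤ N) (ρ : ℝ) (x : Fin N → ℝ) (n : Fin N) : ℝ :=
  if ρ * maxOther hN x n < x n then 1 else 0

noncomputable def payment {N : ℕ} (hN : 2 ≤ N) (ρ : ℝ) (x : Fin N → ℝ) (n : Fin N) : ℝ :=
  zAlloc hN ρ x n * (ρ * maxOther hN x n)

noncomputable def utility {N : ℕ} (hN : 2 ≤ N) (ρ : ℝ) (v : ℝ) (x : Fin N → ℝ) (n : Fin N) : ℝ :=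
  v * zAlloc hN ρ x n - payment hN ρ x n

theorem stmt_7 {N : ℕ} (hN : 2 ≤ N) (ρ : ℝ) (hρ : 1 ≤ ρ)
    (n : Fin N) (v : ℝ) (hv : 0 < v) :
    ∀ (x : Fin N → ℝ) (b : ℝ),
      utility hN ρ v (Function.update x n b) n ≤
        utility hN ρ v (Function.update x n v) n := by
  intro x b
  have hM : ∀ c : ℝ, maxOther hN (Function.update x n c) n = maxOther hN x n := by
    intro c
    unfold maxOther
    exact Finset.sup'_congr _ rfl (fun j hj =>
      Function.update_of_ne (Finset.ne_of_mem_erase hj) _ _)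
  simp only [utility, payment, zAlloc, hM, Function.update_self]
  by_cases h1 : ρ * maxOther hN x n < b <;>
    by_cases h2 : ρ * maxOther hN x n < v <;>
    simp [h1, h2] <;> linarith
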